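/- The function σ ↦ (σ - 1)·ζ(σ) is strictly increasing on the real interval (1, 2]. -/

import Mathlib

/-!
The derivative of `(σ - 1) ζ(σ)` is `ζ(σ) - (σ - 1) ∑ log n · n^{-σ}`. Both Dirichlet series are
estimated by comparing their tails from `n = 3` on with the antiderivatives of the decreasing
functions `x^{-σ}` and `log x · x^{-σ}` (a telescoping form of the integral test). This gives
`ζ(σ) ≥ 1 + 2^{-σ} + 3^{1-σ}/(σ - 1)` and an upper bound for `(σ - 1) ∑ log n · n^{-σ}` with the
same pole term `3^{1-σ}/(σ - 1)`, so positivity of the derivative reduces to an elementary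
inequality in `σ ∈ (1, 2]`, settled by the convexity bound `3^{1-σ} ≤ 1 - 2(σ - 1)/3`.
-/

open Filter Topology Set

lemma Monotone.hasSum_sub_of_tendsto {u : ℕ → ℝ} {L : ℝ} (hu : Monotone u)
    (hL : Tendsto u atTop (𝓝 L)) : HasSum (fun n ↦ u (n + 1) - u n) (L - u 0) := by
  rw [hasSum_iff_tendsto_nat_of_nonneg (fun n ↦ sub_nonneg.2 (hu n.le_succ))]
  simp_rw [Finset.sum_range_sub]
  exact hL.sub_const _

lemma sub_mem_Icc_of_hasDerivAt_of_antitoneOn {f F : ℝ → ℝ} {x : ℝ}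
    (hF : ∀ y ∈ Icc x (x + 1), HasDerivAt F (f y) y) (hf : AntitoneOn f (Icc x (x + 1))) :
    F (x + 1) - F x ∈ Icc (f (x + 1)) (f x) := by
  obtain ⟨c, hc, hslope⟩ := exists_hasDerivAt_eq_slope F f (lt_add_one x)
    (fun y hy ↦ (hF y hy).continuousAt.continuousWithinAt)
    (fun y hy ↦ hF y (Ioo_subset_Icc_self hy))
  rw [add_sub_cancel_left, div_one] at hslope
  rw [← hslope]
  have hc' := Ioo_subset_Icc_self hc
  exact ⟨hf hc' (right_mem_Icc.2 (by linarith)) hc.2.le,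
    hf (left_mem_Icc.2 (by linarith)) hc' hc.1.le⟩

namespace AntitoneOn

variable {f F : ℝ → ℝ} {a L : ℝ}

lemma sub_mem_Icc_nat_add_of_hasDerivAt (hf : AntitoneOn f (Ici a))
    (hF : ∀ x ∈ Ici a, HasDerivAt F (f x) x) (n : ℕ) :
    F (a + n + 1) - F (a + n) ∈ Icc (f (a + n + 1)) (f (a + n)) := by
  have hsub : Icc (a + n) (a + n + 1) ⊆ Ici a := fun y hy ↦ by
    simp only [mem_Ici]; linarith [hy.1, n.cast_nonneg (α := ℝ)]
  exact sub_mem_Icc_of_hasDerivAt_of_antitoneOn (fun y hy ↦ hF y (hsub hy)) (hf.mono hsub)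

lemma hasSum_sub_of_hasDerivAt (hf : AntitoneOn f (Ici a)) (hf₀ : ∀ x ∈ Ici a, 0 ≤ f x)
    (hF : ∀ x ∈ Ici a, HasDerivAt F (f x) x) (hFL : Tendsto F atTop (𝓝 L)) :
    HasSum (fun n : ℕ ↦ F (a + n + 1) - F (a + n)) (L - F a) := by
  have hmono : Monotone fun n : ℕ ↦ F (a + n) := monotone_nat_of_le_succ fun n ↦ by
    have := hf₀ (a + n + 1) (by simp only [mem_Ici]; linarith [n.cast_nonneg (α := ℝ)])
    rw [Nat.cast_succ, ← add_assoc]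
    linarith [(hf.sub_mem_Icc_nat_add_of_hasDerivAt hF n).1]
  have hlim : Tendsto (fun n : ℕ ↦ F (a + n)) atTop (𝓝 L) :=
    hFL.comp (tendsto_atTop_add_const_left _ a tendsto_natCast_atTop_atTop)
  simpa [add_assoc] using hmono.hasSum_sub_of_tendsto hlim

lemma summable_nat_add_one_of_hasDerivAt (hf : AntitoneOn f (Ici a)) (hf₀ : ∀ x ∈ Ici a, 0 ≤ f x)
    (hF : ∀ x ∈ Ici a, HasDerivAt F (f x) x) (hFL : Tendsto F atTop (𝓝 L)) :
    Summable fun n : ℕ ↦ f (a + n + 1) :=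
  (hf.hasSum_sub_of_hasDerivAt hf₀ hF hFL).summable.of_nonneg_of_le
    (fun n ↦ hf₀ _ (by simp only [mem_Ici]; linarith [n.cast_nonneg (α := ℝ)]))
    (fun n ↦ (hf.sub_mem_Icc_nat_add_of_hasDerivAt hF n).1)

lemma summable_nat_add_of_hasDerivAt (hf : AntitoneOn f (Ici a)) (hf₀ : ∀ x ∈ Ici a, 0 ≤ f x)
    (hF : ∀ x ∈ Ici a, HasDerivAt F (f x) x) (hFL : Tendsto F atTop (𝓝 L)) :
    Summable fun n : ℕ ↦ f (a + n) := by
  rw [← summable_nat_add_iff 1]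
  simpa [add_assoc] using hf.summable_nat_add_one_of_hasDerivAt hf₀ hF hFL

lemma sub_le_tsum_nat_add_of_hasDerivAt (hf : AntitoneOn f (Ici a)) (hf₀ : ∀ x ∈ Ici a, 0 ≤ f x)
    (hF : ∀ x ∈ Ici a, HasDerivAt F (f x) x) (hFL : Tendsto F atTop (𝓝 L)) :
    L - F a ≤ ∑' n : ℕ, f (a + n) :=
  hasSum_le (fun n ↦ (hf.sub_mem_Icc_nat_add_of_hasDerivAt hF n).2)
    (hf.hasSum_sub_of_hasDerivAt hf₀ hF hFL) (hf.summable_nat_add_of_hasDerivAt hf₀ hF hFL).hasSum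

lemma tsum_nat_add_le_of_hasDerivAt (hf : AntitoneOn f (Ici a)) (hf₀ : ∀ x ∈ Ici a, 0 ≤ f x)
    (hF : ∀ x ∈ Ici a, HasDerivAt F (f x) x) (hFL : Tendsto F atTop (𝓝 L)) :
    ∑' n : ℕ, f (a + n) ≤ f a + (L - F a) := by
  rw [(hf.summable_nat_add_of_hasDerivAt hf₀ hF hFL).tsum_eq_zero_add]
  simp only [Nat.cast_zero, add_zero, Nat.cast_add, Nat.cast_one, ← add_assoc]
  gcongr
  exact (hasSum_le (fun n ↦ (hf.sub_mem_Icc_nat_add_of_hasDerivAt hF n).1)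
    (hf.summable_nat_add_one_of_hasDerivAt hf₀ hF hFL).hasSum
    (hf.hasSum_sub_of_hasDerivAt hf₀ hF hFL))

end AntitoneOn

namespace Real

variable {σ a : ℝ}

lemma hasDerivAt_rpow_one_sub_div {x : ℝ} (hσ : σ ≠ 1) (hx : 0 < x) :
    HasDerivAt (fun x ↦ x ^ (1 - σ) / (1 - σ)) (x ^ (-σ)) x := by
  refine ((hasDerivAt_rpow_const (p := 1 - σ) (.inl hx.ne')).div_const (1 - σ)).congr_deriv ?_
  rw [sub_sub_cancel_left, mul_div_cancel_left₀ _ (sub_ne_zero.2 hσ.symm)]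

lemma hasDerivAt_rpow_one_sub_mul_log {x : ℝ} (hσ : σ ≠ 1) (hx : 0 < x) :
    HasDerivAt (fun x ↦ -(x ^ (1 - σ) * (log x / (σ - 1) + 1 / (σ - 1) ^ 2)))
      (log x * x ^ (-σ)) x := by
  have hσ' : σ - 1 ≠ 0 := sub_ne_zero.2 hσ
  refine ((hasDerivAt_rpow_const (p := 1 - σ) (.inl hx.ne')).mul
    (((hasDerivAt_log hx.ne').div_const (σ - 1)).add_const (1 / (σ - 1) ^ 2))).neg.congr_deriv ?_
  have hpow : x ^ (1 - σ) = x ^ (-σ) * x := by rw [← rpow_add_one hx.ne', neg_add_eq_sub]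
  rw [sub_sub_cancel_left, hpow]
  field_simp
  ring

lemma rpow_one_sub_div_le_tsum_nat_add_rpow_neg (ha : 0 < a) (hσ : 1 < σ) :
    a ^ (1 - σ) / (σ - 1) ≤ ∑' n : ℕ, (a + n) ^ (-σ) := by
  have hlim : Tendsto (fun x : ℝ ↦ x ^ (1 - σ) / (1 - σ)) atTop (𝓝 0) := by
    simpa [neg_sub] using (tendsto_rpow_neg_atTop (y := σ - 1) (by linarith)).div_const (1 - σ)
  have := ((antitoneOn_rpow_Ioi_of_exponent_nonpos (r := -σ) (by linarith)).mono
    (Ici_subset_Ioi.2 ha)).sub_le_tsum_nat_add_of_hasDerivAt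
    (fun x hx ↦ rpow_nonneg (ha.le.trans hx) _)
    (fun x hx ↦ hasDerivAt_rpow_one_sub_div hσ.ne' (ha.trans_le hx)) hlim
  rwa [zero_sub, ← div_neg, neg_sub] at this

lemma antitoneOn_log_mul_rpow_neg (hσ : 1 ≤ σ) :
    AntitoneOn (fun x ↦ log x * x ^ (-σ)) (Ici (exp 1)) := by
  intro x hx y hy hxy
  have hx₀ : 0 < x := (exp_pos 1).trans_le hx
  have hy₀ : 0 < y := hx₀.trans_le hxy
  have hsplit {z : ℝ} (hz : 0 < z) : log z * z ^ (-σ) = log z / z * z ^ (1 - σ) := by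
    rw [sub_eq_neg_add, rpow_add_one hz.ne']
    field_simp
  simp only [hsplit hx₀, hsplit hy₀]
  exact mul_le_mul (log_div_self_antitoneOn hx hy hxy)
    (rpow_le_rpow_of_nonpos hx₀ hxy (by linarith)) (rpow_nonneg hy₀.le _)
    (div_nonneg (log_nonneg (one_le_exp zero_le_one |>.trans hx)) hx₀.le)

lemma tendsto_rpow_one_sub_mul_log (hσ : 1 < σ) :
    Tendsto (fun x ↦ -(x ^ (1 - σ) * (log x / (σ - 1) + 1 / (σ - 1) ^ 2))) atTop (𝓝 0) := by
  have hpow : Tendsto (fun x : ℝ ↦ x ^ (1 - σ)) atTop (𝓝 0) := by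
    simpa using tendsto_rpow_neg_atTop (y := σ - 1) (by linarith)
  have hlog : Tendsto (fun x : ℝ ↦ x ^ (1 - σ) * log x) atTop (𝓝 0) := by
    refine (isLittleO_log_rpow_atTop (r := σ - 1) (by linarith)).tendsto_div_nhds_zero.congr' ?_
    filter_upwards [eventually_gt_atTop 0] with x hx
    rw [← neg_sub σ 1, rpow_neg hx.le, div_eq_inv_mul]
  simpa [mul_add, mul_div_assoc, div_eq_mul_inv, mul_assoc] using
    ((hlog.div_const (σ - 1)).add (hpow.div_const ((σ - 1) ^ 2))).neg

lemma log_mul_rpow_nonneg {x : ℝ} (hx : 1 ≤ x) (p : ℝ) : 0 ≤ log x * x ^ p :=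
  mul_nonneg (log_nonneg hx) (rpow_nonneg (zero_le_one.trans hx) p)

lemma summable_nat_add_log_mul_rpow_neg (ha : exp 1 ≤ a) (hσ : 1 < σ) :
    Summable fun n : ℕ ↦ log (a + n) * (a + n) ^ (-σ) :=
  ((antitoneOn_log_mul_rpow_neg hσ.le).mono (Ici_subset_Ici.2 ha)).summable_nat_add_of_hasDerivAt
    (fun _ hx ↦ log_mul_rpow_nonneg ((one_le_exp zero_le_one).trans (ha.trans hx)) _)
    (fun _ hx ↦ hasDerivAt_rpow_one_sub_mul_log hσ.ne' ((exp_pos 1).trans_le (ha.trans hx)))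
    (tendsto_rpow_one_sub_mul_log hσ)

lemma tsum_nat_add_log_mul_rpow_neg_le (ha : exp 1 ≤ a) (hσ : 1 < σ) :
    ∑' n : ℕ, log (a + n) * (a + n) ^ (-σ) ≤
      log a * a ^ (-σ) + a ^ (1 - σ) * (log a / (σ - 1) + 1 / (σ - 1) ^ 2) := by
  simpa using
    ((antitoneOn_log_mul_rpow_neg hσ.le).mono (Ici_subset_Ici.2 ha)).tsum_nat_add_le_of_hasDerivAt
    (fun _ hx ↦ log_mul_rpow_nonneg ((one_le_exp zero_le_one).trans (ha.trans hx)) _)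
    (fun _ hx ↦ hasDerivAt_rpow_one_sub_mul_log hσ.ne' ((exp_pos 1).trans_le (ha.trans hx)))
    (tendsto_rpow_one_sub_mul_log hσ)

end Real

open Complex in
lemma LSeries_ofReal_eq_ofReal_tsum (f : ℕ → ℝ) {σ : ℝ} (hσ : σ ≠ 0) :
    LSeries (fun n ↦ (f n : ℂ)) σ = ↑(∑' n : ℕ, f n * (n : ℝ) ^ (-σ)) := by
  rw [LSeries, ofReal_tsum]
  refine tsum_congr fun n ↦ ?_
  rcases eq_or_ne n 0 with rfl | hn
  · simp [Real.zero_rpow (neg_ne_zero.2 hσ)]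
  · rw [LSeries.term_of_ne_zero hn, ofReal_mul, ofReal_cpow n.cast_nonneg, ofReal_neg,
      ofReal_natCast, cpow_neg, div_eq_mul_inv]

lemma riemannZeta_ofReal_eq_tsum {σ : ℝ} (hσ : 1 < σ) :
    riemannZeta σ = ↑(∑' n : ℕ, (n : ℝ) ^ (-σ)) := by
  rw [← LSeries_one_eq_riemannZeta (by simpa using hσ),
    show (1 : ℕ → ℂ) = fun n ↦ ((1 : ℝ) : ℂ) by ext; simp,
    LSeries_ofReal_eq_ofReal_tsum _ (by positivity)]
  simp

lemma hasDerivAt_riemannZeta_ofReal_re {σ : ℝ} (hσ : 1 < σ) :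
    HasDerivAt (fun x : ℝ ↦ (riemannZeta x).re) (-∑' n : ℕ, Real.log n * (n : ℝ) ^ (-σ)) σ := by
  have hσ' : 1 < (σ : ℂ).re := by simpa using hσ
  have hL : HasDerivAt riemannZeta (-LSeries (LSeries.logMul 1) σ) σ :=
    (LSeries_hasDerivAt (by rw [LSeries.abscissaOfAbsConv_one]; exact_mod_cast hσ'))
      |>.congr_of_eventuallyEq
      (eventually_of_mem ((isOpen_lt continuous_const Complex.continuous_re).mem_nhds hσ')
        fun s hs ↦ (LSeries_one_eq_riemannZeta hs).symm)
  have hlog : LSeries.logMul 1 = fun n : ℕ ↦ ((Real.log n : ℝ) : ℂ) := by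
    ext n; simp [LSeries.logMul, Complex.ofReal_log n.cast_nonneg]
  rw [hlog, LSeries_ofReal_eq_ofReal_tsum _ (by positivity)] at hL
  simpa using hL.real_of_complex

open Real in
lemma one_add_two_rpow_neg_add_le_riemannZeta_re {σ : ℝ} (hσ : 1 < σ) :
    1 + 2 ^ (-σ) + 3 ^ (1 - σ) / (σ - 1) ≤ (riemannZeta σ).re := by
  have hsum : Summable fun n : ℕ ↦ (n : ℝ) ^ (-σ) := summable_nat_rpow.2 (by linarith)
  rw [riemannZeta_ofReal_eq_tsum hσ, Complex.ofReal_re, ← hsum.sum_add_tsum_nat_add 3]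
  have htail := rpow_one_sub_div_le_tsum_nat_add_rpow_neg (a := 3) (by norm_num) hσ
  simp only [Finset.sum_range_succ, Finset.sum_range_zero, Nat.cast_add, Nat.cast_ofNat,
    Nat.cast_zero, Nat.cast_one, zero_rpow (by linarith : -σ ≠ 0), one_rpow, zero_add,
    add_comm _ (3 : ℝ)]
  linarith

open Real in
lemma tsum_log_mul_rpow_neg_le {σ : ℝ} (hσ : 1 < σ) :
    ∑' n : ℕ, log n * (n : ℝ) ^ (-σ) ≤ log 2 * 2 ^ (-σ) + log 3 * 3 ^ (-σ)
      + 3 ^ (1 - σ) * (log 3 / (σ - 1) + 1 / (σ - 1) ^ 2) := by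
  have h3 : exp 1 ≤ 3 := by linarith [exp_one_lt_d9]
  have hsum : Summable fun n : ℕ ↦ log n * (n : ℝ) ^ (-σ) := by
    rw [← summable_nat_add_iff 3]
    simpa [add_comm _ (3 : ℝ)] using summable_nat_add_log_mul_rpow_neg h3 hσ
  rw [← hsum.sum_add_tsum_nat_add 3]
  have htail := tsum_nat_add_log_mul_rpow_neg_le h3 hσ
  simp only [Finset.sum_range_succ, Finset.sum_range_zero, Nat.cast_add, Nat.cast_ofNat,
    Nat.cast_zero, Nat.cast_one, log_zero, log_one, zero_mul, zero_add, add_comm _ (3 : ℝ)]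
  linarith

open Real in
lemma sub_one_mul_tsum_log_mul_rpow_neg_lt_riemannZeta_re {σ : ℝ} (hσ₁ : 1 < σ) (hσ₂ : σ ≤ 2) :
    (σ - 1) * ∑' n : ℕ, log n * (n : ℝ) ^ (-σ) < (riemannZeta σ).re := by
  have ht : 0 < σ - 1 := by linarith
  have hchord : (3 : ℝ) ^ (1 - σ) ≤ 1 + (σ - 1) * (-2 / 3) := by
    have := rpow_one_add_le_one_add_mul_self (s := -2 / 3) (by norm_num) ht.le (by linarith)
    rwa [show (1 : ℝ) + -2 / 3 = 3⁻¹ by norm_num, inv_rpow (by norm_num), ← rpow_neg (by norm_num),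
      neg_sub] at this
  have h2_ge : (2 : ℝ) ^ (-2 : ℝ) ≤ 2 ^ (-σ) := rpow_le_rpow_of_exponent_le one_le_two (by linarith)
  have h2_le : (2 : ℝ) ^ (-σ) ≤ 2 ^ (-1 : ℝ) := rpow_le_rpow_of_exponent_le one_le_two (by linarith)
  have h3_le : (3 : ℝ) ^ (-σ) ≤ 3 ^ (-1 : ℝ) :=
    rpow_le_rpow_of_exponent_le (by norm_num) (by linarith)
  rw [rpow_neg zero_le_two, rpow_two] at h2_ge
  rw [rpow_neg_one] at h2_le h3_le
  norm_num at h2_ge h2_le h3_le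
  have hlog₂ : 0 ≤ log 2 := log_nonneg one_le_two
  have hlog₃ : 0 ≤ log 3 := log_nonneg (by norm_num)
  -- The left side is at most `log 3 - (σ - 1) (log 3 / 3 - log 2 / 2) ≤ log 3 < 5 / 4`.
  have hnum : (3 : ℝ) ^ (1 - σ) * log 3 + (σ - 1) * (log 2 * 2 ^ (-σ) + log 3 * 3 ^ (-σ))
      < 1 + 2 ^ (-σ) := by
    nlinarith [mul_le_mul_of_nonneg_right hchord hlog₃, mul_le_mul_of_nonneg_left h2_le hlog₂,
      mul_le_mul_of_nonneg_left h3_le hlog₃, log_two_lt_d9, log_three_lt_d9]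
  calc (σ - 1) * ∑' n : ℕ, log n * (n : ℝ) ^ (-σ)
      ≤ (σ - 1) * (log 2 * 2 ^ (-σ) + log 3 * 3 ^ (-σ)
          + 3 ^ (1 - σ) * (log 3 / (σ - 1) + 1 / (σ - 1) ^ 2)) :=
        mul_le_mul_of_nonneg_left (tsum_log_mul_rpow_neg_le hσ₁) ht.le
    _ = 3 ^ (1 - σ) * log 3 + (σ - 1) * (log 2 * 2 ^ (-σ) + log 3 * 3 ^ (-σ))
          + 3 ^ (1 - σ) / (σ - 1) := by
        field_simp
        ring
    _ < 1 + 2 ^ (-σ) + 3 ^ (1 - σ) / (σ - 1) := by linarith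
    _ ≤ (riemannZeta σ).re := one_add_two_rpow_neg_add_le_riemannZeta_re hσ₁

/-- The function `σ ↦ (σ - 1) ζ(σ)` is strictly increasing on `(1, 2]`. -/
theorem strictMonoOn_sub_one_mul_zeta :
    StrictMonoOn (fun σ : ℝ => (σ - 1) * (riemannZeta σ).re) (Set.Ioc 1 2) := by
  have hderiv (σ : ℝ) (hσ : σ ∈ Ioc (1 : ℝ) 2) :
      HasDerivAt (fun σ : ℝ => (σ - 1) * (riemannZeta σ).re)
        ((riemannZeta σ).re - (σ - 1) * ∑' n : ℕ, Real.log n * (n : ℝ) ^ (-σ)) σ :=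
    (((hasDerivAt_id σ).sub_const 1).mul (hasDerivAt_riemannZeta_ofReal_re hσ.1)).congr_deriv
      (by simp only [id, one_mul]; ring)
  refine strictMonoOn_of_hasDerivWithinAt_pos (convex_Ioc 1 2)
    (fun σ hσ ↦ (hderiv σ hσ).continuousAt.continuousWithinAt)
    (fun σ hσ ↦ (hderiv σ (interior_subset hσ)).hasDerivWithinAt) fun σ hσ ↦ ?_
  rw [interior_Ioc] at hσ
  exact sub_pos.2 (sub_one_mul_tsum_log_mul_rpow_neg_lt_riemannZeta_re hσ.1 hσ.2.le)
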